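/- arXiv:2207.06685 — 2 statements merged into one kernel-verified Lean document; each statement's English description precedes it below -/
import Mathlib

section
/- For the λ-biased random walk on the d-regular tree, the first-return generating function satisfies U(z) = [(d-1+λ) - √((d-1+λ)^2 - 4λ(d-1)z^2)] / (2(d-1)) for all real z with |z| ≤ (d-1+λ)/(2√(λ(d-1))). -/
/-! With `x = λ(d-1)z²/(d-1+λ)²` the series is `(d-1+λ)/(d-1)` times the Catalan generating
function `T(x) = ∑ Cₙ x^(n+1)`, and the bound on `|z|` says exactly `x ≤ 1/4`. The Catalan
recursion gives `T = x + T²`. Since `Cₙ/4^(n+1) = bₙ - bₙ₊₁` with `bₙ = (2n choose n)/(2·4ⁿ)`,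
the partial sums of `T(1/4)` are at most `b₀ = 1/2`; hence the series converges on `[0, 1/4]`
with `T ≤ 1/2`, which selects the root `T = (1 - √(1 - 4x))/2`. -/

noncomputable def catR (k : ℕ) : ℝ := (Nat.choose (2 * k) k : ℝ) / (k + 1)

open Finset Filter

lemma catR_eq_catalan (n : ℕ) : catR n = catalan n := by
  rw [catR, ← Nat.centralBinom_eq_two_mul_choose, ← succ_mul_catalan_eq_centralBinom]
  push_cast
  field_simp

lemma catalan_div_four_pow_succ (n : ℕ) :
    (catalan n : ℝ) / 4 ^ (n + 1) =
      n.centralBinom / (2 * 4 ^ n) - (n + 1).centralBinom / (2 * 4 ^ (n + 1)) := by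
  have hn : (n : ℝ) + 1 ≠ 0 := by positivity
  have hcat : (catalan n : ℝ) = n.centralBinom / (n + 1) := by
    rw [eq_div_iff hn, mul_comm]
    exact_mod_cast succ_mul_catalan_eq_centralBinom n
  have hbinom : ((n + 1).centralBinom : ℝ) = 2 * (2 * n + 1) * n.centralBinom / (n + 1) := by
    rw [eq_div_iff hn, mul_comm]
    exact_mod_cast Nat.succ_mul_centralBinom_succ n
  rw [hcat, hbinom]
  field_simp
  ring

lemma sum_range_catalan_div_four_pow_le_half (N : ℕ) :
    ∑ i ∈ range N, (catalan i : ℝ) / 4 ^ (i + 1) ≤ 1 / 2 := by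
  simp only [catalan_div_four_pow_succ]
  rw [sum_range_sub', Nat.centralBinom_zero]
  norm_num
  positivity

lemma sum_range_catalan_mul_pow_le_half {x : ℝ} (hx₀ : 0 ≤ x) (hx : x ≤ 1 / 4) (N : ℕ) :
    ∑ i ∈ range N, (catalan i : ℝ) * x ^ (i + 1) ≤ 1 / 2 := by
  refine le_trans (sum_le_sum fun i _ => ?_) (sum_range_catalan_div_four_pow_le_half N)
  rw [div_eq_mul_inv, ← inv_pow, ← one_div]
  gcongr

lemma summable_catalan_mul_pow {x : ℝ} (hx₀ : 0 ≤ x) (hx : x ≤ 1 / 4) :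
    Summable fun n => (catalan n : ℝ) * x ^ (n + 1) :=
  summable_of_sum_range_le (fun _ => by positivity) (sum_range_catalan_mul_pow_le_half hx₀ hx)

lemma tsum_catalan_mul_pow_le_half {x : ℝ} (hx₀ : 0 ≤ x) (hx : x ≤ 1 / 4) :
    ∑' n, (catalan n : ℝ) * x ^ (n + 1) ≤ 1 / 2 :=
  Real.tsum_le_of_sum_range_le (fun _ => by positivity) (sum_range_catalan_mul_pow_le_half hx₀ hx)

lemma sum_antidiagonal_catalan_mul_pow (x : ℝ) (n : ℕ) :
    ∑ kl ∈ antidiagonal n, (catalan kl.1 : ℝ) * x ^ (kl.1 + 1) * (catalan kl.2 * x ^ (kl.2 + 1)) =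
      catalan (n + 1) * x ^ (n + 1 + 1) := by
  rw [catalan_succ', Nat.cast_sum, sum_mul]
  refine sum_congr rfl fun kl hkl => ?_
  rw [← mem_antidiagonal.mp hkl]
  push_cast
  ring

lemma tsum_catalan_mul_pow_sq {x : ℝ} (hx₀ : 0 ≤ x) (hx : x ≤ 1 / 4) :
    (∑' n, (catalan n : ℝ) * x ^ (n + 1)) ^ 2 = ∑' n, (catalan n : ℝ) * x ^ (n + 1) - x := by
  have hsum := summable_catalan_mul_pow hx₀ hx
  have hnorm : Summable fun n => ‖(catalan n : ℝ) * x ^ (n + 1)‖ :=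
    hsum.congr fun n => (Real.norm_of_nonneg (by positivity)).symm
  rw [sq, tsum_mul_tsum_eq_tsum_sum_antidiagonal_of_summable_norm hnorm hnorm,
    tsum_congr (sum_antidiagonal_catalan_mul_pow x), hsum.tsum_eq_zero_add]
  simp

lemma hasSum_catalan_mul_pow {x : ℝ} (hx₀ : 0 ≤ x) (hx : x ≤ 1 / 4) :
    HasSum (fun n => (catalan n : ℝ) * x ^ (n + 1)) ((1 - √(1 - 4 * x)) / 2) := by
  set T := ∑' n, (catalan n : ℝ) * x ^ (n + 1)
  have hT : 1 - 2 * T = √(1 - 4 * x) := by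
    rw [← Real.sqrt_sq (by linarith [tsum_catalan_mul_pow_le_half hx₀ hx] : 0 ≤ 1 - 2 * T)]
    congr 1
    linear_combination 4 * tsum_catalan_mul_pow_sq hx₀ hx
  rw [← hT, show (1 - (1 - 2 * T)) / 2 = T by ring]
  exact (summable_catalan_mul_pow hx₀ hx).hasSum

lemma hasSum_catalan_mul_pow_mul_pow {a b : ℝ} (ha : a ≠ 0) (hab₀ : 0 ≤ a * b)
    (hab : a * b ≤ 1 / 4) :
    HasSum (fun n => (catalan n : ℝ) * a ^ n * b ^ (n + 1))
      ((1 - √(1 - 4 * (a * b))) / (2 * a)) := by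
  have hterm : (fun n => (catalan n : ℝ) * a ^ n * b ^ (n + 1)) =
      fun n => (catalan n : ℝ) * (a * b) ^ (n + 1) / a := by
    funext n
    field_simp
    ring
  rw [hterm, ← div_div]
  exact (hasSum_catalan_mul_pow hab₀ hab).div_const a

lemma four_mul_mul_sq_le_sq_of_abs_le {c s z : ℝ} (hc : 0 < c) (hz : |z| ≤ s / (2 * √c)) :
    4 * c * z ^ 2 ≤ s ^ 2 := by
  have h : |z| * (2 * √c) ≤ s := (le_div_iff₀ (by positivity)).mp hz
  calc 4 * c * z ^ 2 = (|z| * (2 * √c)) ^ 2 := by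
        rw [mul_pow, mul_pow, sq_abs, Real.sq_sqrt hc.le]
        ring
    _ ≤ s ^ 2 := pow_le_pow_left₀ (by positivity) h 2

/-- The first-return generating function `U(z) = ∑_{n≥1} f^{(2n)} z^{2n}` of the
`λ`-biased random walk on the `d`-regular tree, where
`f^{(2n)} = c_{n-1} ((d-1)/(d-1+λ))^{n-1} (λ/(d-1+λ))^n`, equals
`[(d-1+λ) - √((d-1+λ)² - 4λ(d-1)z²)]/(2(d-1))` for `|z| ≤ (d-1+λ)/(2√(λ(d-1)))`. -/
theorem firstReturn_generating_function (d : ℕ) (hd : 2 ≤ d) (lam : ℝ) (hlam : 0 < lam)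
    (z : ℝ) (hz : |z| ≤ ((d : ℝ) - 1 + lam) / (2 * Real.sqrt (lam * ((d : ℝ) - 1)))) :
    ∑' n : ℕ,
        catR n * (((d : ℝ) - 1) / ((d : ℝ) - 1 + lam)) ^ n *
          (lam / ((d : ℝ) - 1 + lam)) ^ (n + 1) * z ^ (2 * (n + 1)) =
      (((d : ℝ) - 1 + lam) -
          Real.sqrt (((d : ℝ) - 1 + lam) ^ 2 - 4 * lam * ((d : ℝ) - 1) * z ^ 2)) /
        (2 * ((d : ℝ) - 1)) := by
  set D : ℝ := (d : ℝ) - 1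
  set s : ℝ := D + lam
  have hD : 0 < D := by
    have : (2 : ℝ) ≤ d := by exact_mod_cast hd
    linarith
  have hs : 0 < s := by positivity
  have hzs : 4 * lam * D * z ^ 2 ≤ s ^ 2 := by
    simpa [mul_assoc] using four_mul_mul_sq_le_sq_of_abs_le (by positivity) hz
  have hab : D / s * (lam * z ^ 2 / s) = lam * D * z ^ 2 / s ^ 2 := by
    rw [div_mul_div_comm, ← sq]
    ring
  have key := hasSum_catalan_mul_pow_mul_pow (a := D / s) (b := lam * z ^ 2 / s)
    (by positivity) (by rw [hab]; positivity)
    (by rw [hab, div_le_iff₀ (by positivity)]; linarith)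
  convert key.tsum_eq using 1
  · congr 1 with n
    rw [catR_eq_catalan, pow_mul, mul_div_right_comm, mul_pow]
    exact mul_assoc _ _ _
  · rw [hab, show 1 - 4 * (lam * D * z ^ 2 / s ^ 2) = (s ^ 2 - 4 * lam * D * z ^ 2) / s ^ 2 by
      field_simp, Real.sqrt_div' _ (sq_nonneg s), Real.sqrt_sq hs.le]
    field_simp
end

section
/- With Φ(t) = [-ab + √(a^2 + ρ^2(1-b^2)t^2)]/(1-b^2) where a = 2(d-1)/(d-1+λ), b = (d-1-λ)/(d-1+λ), ρ = 2√(λ(d-1))/(d-1+λ), and 0 < λ < d-1, the Green function G(z) = a/(b + √(1-ρ^2z^2)) satisfies the functional equation G(z) = Φ(z·G(z)) for all |z| ≤ 1/ρ. -/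
/-!
Write `s = √(1 - ρ²z²)`, so `G(z) = a/(b + s)` and `ρ²z² = 1 - s²`. Then
`a² + ρ²(1 - b²)(z G(z))² = a²((b + s)² + (1 - b²)(1 - s²))/(b + s)² = (a(1 + bs)/(b + s))²`,
so the square root in `Φ(z G(z))` is `a(1 + bs)/(b + s)`, and
`-ab + a(1 + bs)/(b + s) = a(1 - b²)/(b + s)`.
-/

lemma sq_mul_sq_le_one_of_abs_le_one_div {ρ z : ℝ} (hz : |z| ≤ 1 / ρ) : ρ ^ 2 * z ^ 2 ≤ 1 := by
  rcases (one_div_nonneg.mp ((abs_nonneg z).trans hz)).eq_or_lt with hρ | hρ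
  · simp [← hρ]
  · have hρz : |ρ * z| ≤ 1 := by
      rw [abs_mul, abs_of_pos hρ]
      calc ρ * |z| ≤ ρ * (1 / ρ) := mul_le_mul_of_nonneg_left hz hρ.le
        _ = 1 := mul_one_div_cancel hρ.ne'
    rw [← mul_pow]
    exact (sq_le_one_iff_abs_le_one _).mpr hρz

lemma sq_add_sq_mul_div_add_sq {a b s ρ z : ℝ} (hbs : b + s ≠ 0) (hs : s ^ 2 = 1 - ρ ^ 2 * z ^ 2) :
    a ^ 2 + ρ ^ 2 * (1 - b ^ 2) * (z * (a / (b + s))) ^ 2 = (a * (1 + b * s) / (b + s)) ^ 2 := by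
  field_simp
  linear_combination (1 - b ^ 2) * a ^ 2 * hs

lemma div_add_eq_neg_mul_add_sqrt_div_one_sub_sq {a b s ρ z : ℝ} (ha : 0 ≤ a) (hb : 0 < b) (hb1 : b < 1) (hs0 : 0 ≤ s)
    (hs : s ^ 2 = 1 - ρ ^ 2 * z ^ 2) :
    a / (b + s) =
      (-(a * b) + √(a ^ 2 + ρ ^ 2 * (1 - b ^ 2) * (z * (a / (b + s))) ^ 2)) / (1 - b ^ 2) := by
  have hbs : 0 < b + s := by positivity
  have hb2 : 1 - b ^ 2 ≠ 0 := by nlinarith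
  rw [sq_add_sq_mul_div_add_sq hbs.ne' hs, Real.sqrt_sq (by positivity)]
  field_simp
  ring

theorem green_functional_equation_general (d : ℕ) (lam : ℝ) (hlam : 0 < lam)
    (hlam' : lam < (d : ℝ) - 1) (z : ℝ)
    (a b ρ : ℝ) (ha : a = 2 * ((d : ℝ) - 1) / ((d : ℝ) - 1 + lam))
    (hb : b = ((d : ℝ) - 1 - lam) / ((d : ℝ) - 1 + lam))
    (G Φ : ℝ → ℝ)
    (hG : ∀ w, G w = a / (b + Real.sqrt (1 - ρ ^ 2 * w ^ 2)))
    (hΦ : ∀ t, Φ t = (-(a * b) + Real.sqrt (a ^ 2 + ρ ^ 2 * (1 - b ^ 2) * t ^ 2)) / (1 - b ^ 2))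
    (hz : |z| ≤ 1 / ρ) :
    G z = Φ (z * G z) := by
  have hD : 0 < (d : ℝ) - 1 + lam := by linarith
  have ha0 : 0 ≤ a := by rw [ha]; exact div_nonneg (by linarith) hD.le
  have hb0 : 0 < b := by rw [hb]; exact div_pos (by linarith) hD
  have hb1 : b < 1 := by rw [hb, div_lt_one hD]; linarith
  have hs : √(1 - ρ ^ 2 * z ^ 2) ^ 2 = 1 - ρ ^ 2 * z ^ 2 :=
    Real.sq_sqrt (sub_nonneg.mpr (sq_mul_sq_le_one_of_abs_le_one_div hz))
  rw [hΦ, hG]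
  exact div_add_eq_neg_mul_add_sqrt_div_one_sub_sq ha0 hb0 hb1 (Real.sqrt_nonneg _) hs

/-- With `a = 2(d-1)/(d-1+λ)`, `b = (d-1-λ)/(d-1+λ)`, `ρ = 2√(λ(d-1))/(d-1+λ)` and
`Φ(t) = [-ab + √(a² + ρ²(1-b²)t²)]/(1-b²)`, the Green function
`G(z) = a/(b + √(1-ρ²z²))` satisfies `G(z) = Φ(z·G(z))` for all `|z| ≤ 1/ρ`,
whenever `0 < λ < d-1` and `d ≥ 2`. -/
theorem green_functional_equation (d : ℕ) (hd : 2 ≤ d) (lam : ℝ) (hlam : 0 < lam)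
    (hlam' : lam < (d : ℝ) - 1) (z : ℝ)
    (a b ρ : ℝ) (ha : a = 2 * ((d : ℝ) - 1) / ((d : ℝ) - 1 + lam))
    (hb : b = ((d : ℝ) - 1 - lam) / ((d : ℝ) - 1 + lam))
    (hρ : ρ = 2 * Real.sqrt (lam * ((d : ℝ) - 1)) / ((d : ℝ) - 1 + lam))
    (G Φ : ℝ → ℝ)
    (hG : ∀ w, G w = a / (b + Real.sqrt (1 - ρ ^ 2 * w ^ 2)))
    (hΦ : ∀ t, Φ t = (-(a * b) + Real.sqrt (a ^ 2 + ρ ^ 2 * (1 - b ^ 2) * t ^ 2)) / (1 - b ^ 2))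
    (hz : |z| ≤ 1 / ρ) :
    G z = Φ (z * G z) :=
  green_functional_equation_general d lam hlam hlam' z a b ρ ha hb G Φ hG hΦ hz
end
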